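/- Let n ≥ 1 and let H be a discrete abstract n-hammock all of whose projections belong to the class LO_fp of finitely presented linear orders. Assume that either π_i(H) is bounded below for every i ∈ [n] or π_i(H) is unbounded below for every i ∈ [n], and likewise that either π_i(H) is bounded above for every i ∈ [n] or π_i(H) is unbounded above for every i ∈ [n]. Then d(H) < ω². -/

import Mathlib

universe u v

attribute [local instance] Classical.propDecidable

noncomputable section

namespace PaperHam

/-- The `i`-th projection of a set of tuples. -/
def proj {n : ℕ} {L : Fin n → Type u} (i : Fin n) (S : Set (∀ i, L i)) : Set (L i) :=
  (fun x => x i) '' S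

/-- The set of strict lower bounds of `A` within the ambient carrier `K`. -/
def lowerStrictIn {α : Type u} [LT α] (K A : Set α) : Set α := {b ∈ K | ∀ a ∈ A, b < a}

/-- The set of strict upper bounds of `A` within the ambient carrier `K`. -/
def upperStrictIn {α : Type u} [LT α] (K A : Set α) : Set α := {b ∈ K | ∀ a ∈ A, a < b}

/-- A sub-`n`-clat: a set of tuples coinciding with the product of its projections. -/
def IsSubClat {n : ℕ} {L : Fin n → Type u} (S : Set (∀ i, L i)) : Prop :=
  S = Set.pi Set.univ fun i => proj i S

/-- `H` is an abstract `n`-hammock in the `n`-clat `∏ K i`. -/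
def IsHammockIn {n : ℕ} {L : Fin n → Type u} [∀ i, LinearOrder (L i)]
    (K : ∀ i, Set (L i)) (H : Set (∀ i, L i)) : Prop :=
  ∃ (k : ℕ) (S : Fin (k + 1) → Set (∀ i, L i)),
    (∀ j, IsSubClat (S j)) ∧
    H = ⋃ j, S j ∧
    (∀ i, proj i H = K i) ∧
    (∀ i, (proj i (S 0) ∩ proj i (S (Fin.last k))).Nonempty) ∧
    ∀ (j : Fin k) (i : Fin n),
      lowerStrictIn (K i) (proj i (S j.castSucc)) ∩ proj i (S j.succ) = ∅ ∧
      upperStrictIn (K i) (proj i (S j.castSucc)) ∩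
        lowerStrictIn (K i) (proj i (S j.succ)) = ∅ ∧
      proj i (S j.castSucc) ∩ upperStrictIn (K i) (proj i (S j.succ)) = ∅

/-- `H` is an abstract `n`-hammock in the full `n`-clat `∏ i, L i`. -/
def IsHammock {n : ℕ} {L : Fin n → Type u} [∀ i, LinearOrder (L i)]
    (H : Set (∀ i, L i)) : Prop :=
  IsHammockIn (fun _ => Set.univ) H

/-- A subset of a (pre)ordered type is scattered if it contains no copy of `ℚ`. -/
def IsScatteredSet {α : Type*} [Preorder α] (A : Set α) : Prop :=
  ¬ ∃ f : ℚ → α, StrictMono f ∧ ∀ q, f q ∈ A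

/-- An order is scattered if `ℚ` does not order-embed into it. -/
def IsScatteredOrder (α : Type*) [Preorder α] : Prop :=
  ¬ ∃ f : ℚ → α, StrictMono f

/-- A box in a hammock `H`. -/
def IsBox {n : ℕ} {L : Fin n → Type u} [∀ i, LinearOrder (L i)]
    (H X : Set (∀ i, L i)) : Prop :=
  (∀ i, (proj i X).OrdConnected) ∧ X = H ∩ Set.pi Set.univ fun i => proj i X

/-- A maximal scattered box in `H`. -/
def IsMSB {n : ℕ} {L : Fin n → Type u} [∀ i, LinearOrder (L i)]
    (H X : Set (∀ i, L i)) : Prop :=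
  IsBox H X ∧ IsScatteredSet X ∧ ∀ Y, IsBox H Y → IsScatteredSet Y → X ⊆ Y → Y = X

/-- The scattered condensation class of `x` in the hammock `H`. -/
def condClass {n : ℕ} {L : Fin n → Type u} [∀ i, LinearOrder (L i)]
    (H : Set (∀ i, L i)) (x : ∀ i, L i) : Set (∀ i, L i) :=
  {y ∈ H | IsScatteredSet (H ∩ Set.uIcc x y)}

/-- The scattered condensation class of `x` in a linear order. -/
def condClassLin {α : Type*} [LinearOrder α] (x : α) : Set α :=
  {y | IsScatteredSet (Set.uIcc x y)}

/-- The Hausdorff condensation relation `∼_o` on a linear order. -/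
def hrEquiv {α : Type u} [LinearOrder α] (o : Ordinal.{v}) : α → α → Prop :=
  Ordinal.limitRecOn (motive := fun _ => α → α → Prop) o (fun x y => x = y)
    (fun _ R x y => {s : Set α | ∃ z ∈ Set.uIcc x y, s = {w ∈ Set.uIcc x y | R z w}}.Finite)
    (fun o _ ih x y => ∃ β, ∃ hβ : β < o, ih β hβ x y)

/-- The set of `∼_o`-classes of the linear order `α`. -/
def hrClasses (α : Type u) [LinearOrder α] (o : Ordinal.{u}) : Set (Set α) :=
  {s | ∃ z : α, s = {w | hrEquiv o z w}}

/-- The Hausdorff rank of a linear order: the least ordinal `o` with `α/∼_o` finite,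
`⊤ = ∞` if there is none. -/
def HRrank (α : Type u) [LinearOrder α] : WithTop Ordinal.{u} :=
  if _ : ∃ o : Ordinal.{u}, (hrClasses α o).Finite then
    ((sInf {o : Ordinal.{u} | (hrClasses α o).Finite} : Ordinal.{u}) : WithTop Ordinal.{u})
  else ⊤

/-- The density of a linear order, valued in `{-1} ∪ Ordinal ∪ {∞}`,
encoded as `WithBot (WithTop Ordinal)` (with `⊥ = -1` and `⊤ = ∞`). -/
def density (α : Type u) [LinearOrder α] : WithBot (WithTop Ordinal.{u}) :=
  if _ : ∃ o : Ordinal.{u}, (hrClasses α o).Finite then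
    if Nonempty α then
      (((Ordinal.omega0.{u} * sInf {o : Ordinal.{u} | (hrClasses α o).Finite} +
          (((hrClasses α (sInf {o : Ordinal.{u} | (hrClasses α o).Finite})).ncard - 1 : ℕ) :
            Ordinal.{u}) : Ordinal.{u}) : WithTop Ordinal.{u}) : WithBot (WithTop Ordinal.{u}))
    else ⊥
  else ((⊤ : WithTop Ordinal.{u}) : WithBot (WithTop Ordinal.{u}))

/-- The Hausdorff rank attached to a density value: `∞` if the density is `∞`, and
otherwise the unique ordinal `a` such that the density is `ω·a + p` with `p < ω`. -/
def rankOfDensity (d : WithBot (WithTop Ordinal.{u})) : WithTop Ordinal.{u} :=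
  if h : ∃ o : Ordinal.{u}, d = ((o : WithTop Ordinal.{u}) : WithBot (WithTop Ordinal.{u})) then
    ((h.choose / Ordinal.omega0.{u} : Ordinal.{u}) : WithTop Ordinal.{u})
  else ⊤

/-- A chain in a partial order is linearly ordered. -/
def chainLinearOrder {P : Type u} [PartialOrder P] {A : Set P}
    (h : IsChain (· ≤ ·) A) : LinearOrder ↥A :=
  { (inferInstance : PartialOrder ↥A) with
    le_total := fun a b => by
      rcases eq_or_ne (a : P) (b : P) with hab | hab
      · exact Or.inl (le_of_eq (Subtype.ext hab))
      · exact (h a.2 b.2 hab).imp Subtype.coe_le_coe.mp Subtype.coe_le_coe.mp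
    toDecidableLE := Classical.decRel _ }

/-- The density of a chain in a partial order. -/
def chainDensity {P : Type u} [PartialOrder P] (A : Set P) (h : IsChain (· ≤ ·) A) :
    WithBot (WithTop Ordinal.{u}) :=
  @density ↥A (chainLinearOrder h)

/-- The density of a subset of a partial order: the supremum of the densities of its
chains having a maximum and a minimum. -/
def posetDensitySet {P : Type u} [PartialOrder P] (X : Set P) :
    WithBot (WithTop Ordinal.{u}) :=
  sSup {d | ∃ (A : Set P) (h : IsChain (· ≤ ·) A), A ⊆ X ∧
    (∃ m ∈ A, ∀ a ∈ A, a ≤ m) ∧ (∃ m ∈ A, ∀ a ∈ A, m ≤ a) ∧ d = chainDensity A h}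

/-- A linear order is discrete if every non-maximal element has an immediate successor and
every non-minimal element has an immediate predecessor. -/
def IsDiscreteOrder (α : Type*) [LinearOrder α] : Prop :=
  (∀ x : α, (∃ y, x < y) → ∃ y, x ⋖ y) ∧ ∀ x : α, (∃ y, y < x) → ∃ y, y ⋖ x

/-- `A` is an initial segment (prefix) of `B`. -/
def IsLowerWithin {α : Type*} [Preorder α] (A B : Set α) : Prop :=
  A ⊆ B ∧ ∀ a ∈ A, ∀ b ∈ B, b ≤ a → b ∈ A

/-- `A` is a final segment (suffix) of `B`. -/
def IsUpperWithin {α : Type*} [Preorder α] (A B : Set α) : Prop :=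
  A ⊆ B ∧ ∀ a ∈ A, ∀ b ∈ B, a ≤ b → b ∈ A

/-- A bottom corner of the hammock `H`: a box of `H` which is an `n`-clat such that each
projection is a prefix of the corresponding projection of `H` order-isomorphic to
`L' · ω*` (i.e. `Lex (ℕᵒᵈ × L')`) for some linear order `L'`. -/
def IsBottomCorner {n : ℕ} {L : Fin n → Type u} [∀ i, LinearOrder (L i)]
    (H F : Set (∀ i, L i)) : Prop :=
  IsBox H F ∧ IsSubClat F ∧
    ∀ i, IsLowerWithin (proj i F) (proj i H) ∧
      ∃ (β : Type u) (_ : LinearOrder β), Nonempty (↥(proj i F) ≃o Lex (ℕᵒᵈ × β))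

/-- A top corner of the hammock `H`: a box of `H` which is an `n`-clat such that each
projection is a suffix of the corresponding projection of `H` order-isomorphic to
`L' · ω` (i.e. `Lex (ℕ × L')`) for some linear order `L'`. -/
def IsTopCorner {n : ℕ} {L : Fin n → Type u} [∀ i, LinearOrder (L i)]
    (H F : Set (∀ i, L i)) : Prop :=
  IsBox H F ∧ IsSubClat F ∧
    ∀ i, IsUpperWithin (proj i F) (proj i H) ∧
      ∃ (β : Type u) (_ : LinearOrder β), Nonempty (↥(proj i F) ≃o Lex (ℕ × β))

/-- `W` is the dot sum `A ∔ B ∔ C` of the three subsets `A`, `B`, `C` of a linear order: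
the union is `W`, the maximum of `A` is the minimum of `B`, and the maximum of `B` is the
minimum of `C`. -/
def TripleDotSumEq {α : Type*} [LinearOrder α] (A B C W : Set α) : Prop :=
  W = A ∪ B ∪ C ∧ (∃ x, IsGreatest A x ∧ IsLeast B x) ∧ ∃ y, IsGreatest B y ∧ IsLeast C y

/-- A corner decomposition `(F₋, H₀, F₊)` of the hammock `H`. -/
def IsCornerDecomp {n : ℕ} {L : Fin n → Type u} [∀ i, LinearOrder (L i)]
    (H Fm H0 Fp : Set (∀ i, L i)) : Prop :=
  IsBottomCorner H Fm ∧ IsTopCorner H Fp ∧ H0 ⊆ H ∧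
    IsHammockIn (fun i => proj i H0) H0 ∧
    (∀ i, (∃ m, IsGreatest (proj i H0) m) ∧ ∃ m, IsLeast (proj i H0) m) ∧
    ∀ i, TripleDotSumEq (proj i Fm) (proj i H0) (proj i Fp) (proj i H)

/-- The carrier of the `n`-fold dot sum `L 0 ∔ L 1 ∔ ⋯ ∔ L (n-1)` inside the lexicographic
sigma type: one removes the minimum of `L i` whenever the dot sum of the preceding
components has a maximum (these two points being identified). -/
def dotSumCarrier {n : ℕ} (L : Fin n → Type u) [∀ i, LinearOrder (L i)] :
    Set (Lex (Σ i, L i)) :=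
  {x | ¬ ((∀ b : L (ofLex x).1, (ofLex x).2 ≤ b) ∧
      ∃ j < (ofLex x).1, (∃ m : L j, ∀ b : L j, b ≤ m) ∧
        ∀ k : Fin n, j < k → k < (ofLex x).1 → IsEmpty (L k))}

/-- The carrier of the binary dot sum `α ∔ β` inside `Lex (α ⊕ β)`: the minimum of `β` is
removed (being identified with the maximum of `α`) whenever both exist. -/
def dotCarrier (α β : Type u) [LinearOrder α] [LinearOrder β] : Set (Lex (α ⊕ β)) :=
  {x | ¬ ((∃ m : α, ∀ a : α, a ≤ m) ∧
      ∃ b : β, (∀ b' : β, b ≤ b') ∧ x = toLex (Sum.inr b))}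

/-- The binary dot sum `α ∔ β` of two linear orders. -/
abbrev DotSum (α β : Type u) [LinearOrder α] [LinearOrder β] : Type u := ↥(dotCarrier α β)

/-- The class `LO_fp` of finitely presented linear orders: the smallest class of linear
orders containing the empty and one-element orders, closed under order isomorphism and
under the operations `L ↦ ω·L`, `L ↦ ω*·L` and `(L₁, L₂) ↦ L₁ + L₂`. -/
inductive IsFinPresLO : ∀ (α : Type u), LinearOrder α → Prop
  | subsingleton (α : Type u) [inst : LinearOrder α] (h : Subsingleton α) :
      IsFinPresLO α inst
  | omegaMul (α : Type u) [inst : LinearOrder α] (h : IsFinPresLO α inst) :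
      IsFinPresLO (Lex (α × ℕ)) inferInstance
  | omegaStarMul (α : Type u) [inst : LinearOrder α] (h : IsFinPresLO α inst) :
      IsFinPresLO (Lex (α × ℕᵒᵈ)) inferInstance
  | sum (α β : Type u) [instα : LinearOrder α] [instβ : LinearOrder β]
      (hα : IsFinPresLO α instα) (hβ : IsFinPresLO β instβ) :
      IsFinPresLO (Lex (α ⊕ β)) inferInstance
  | iso (α β : Type u) [instα : LinearOrder α] [instβ : LinearOrder β]
      (hα : IsFinPresLO α instα) (e : α ≃o β) : IsFinPresLO β instβ




section HRLemmas

lemma factor_finite {γ : Type*} {δ : Type*} {ε : Type*} [Nonempty δ] {S : Set γ}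
    (g : γ → δ) (h : γ → ε) (hfin : (h '' S).Finite)
    (hcomp : ∀ a ∈ S, ∀ b ∈ S, h a = h b → g a = g b) : (g '' S).Finite := by
  classical
  refine Set.Finite.of_surjOn
    (fun t => if ht : ∃ a ∈ S, h a = t then g ht.choose else Classical.arbitrary δ)
    ?_ hfin
  rintro _ ⟨a, ha, rfl⟩
  refine ⟨h a, ⟨a, ha, rfl⟩, ?_⟩
  have ht : ∃ b ∈ S, h b = h a := ⟨a, ha, rfl⟩
  simp only [dif_pos ht]
  exact hcomp _ ht.choose_spec.1 _ ha ht.choose_spec.2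

variable {α : Type u} [LinearOrder α]

lemma hrEquiv_zero (x y : α) : hrEquiv (0 : Ordinal.{v}) x y ↔ x = y := by
  unfold hrEquiv; rw [Ordinal.limitRecOn_zero]

lemma hrEquiv_succ_raw (o : Ordinal.{v}) (x y : α) :
    hrEquiv (o + 1) x y ↔
      {s : Set α | ∃ z ∈ Set.uIcc x y, s = {w ∈ Set.uIcc x y | hrEquiv o z w}}.Finite := by
  unfold hrEquiv; rw [Ordinal.add_one_eq_succ, Ordinal.limitRecOn_succ]

lemma hrEquiv_succ (o : Ordinal.{v}) (x y : α) :
    hrEquiv (o + 1) x y ↔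
      ((fun z => {w ∈ Set.uIcc x y | hrEquiv o z w}) '' Set.uIcc x y).Finite := by
  rw [hrEquiv_succ_raw]
  have h : {s : Set α | ∃ z ∈ Set.uIcc x y, s = {w ∈ Set.uIcc x y | hrEquiv o z w}} =
      (fun z => {w ∈ Set.uIcc x y | hrEquiv o z w}) '' Set.uIcc x y := by
    ext s; simp only [Set.mem_setOf_eq, Set.mem_image]
    exact ⟨fun ⟨z, hz, hs⟩ => ⟨z, hz, hs.symm⟩, fun ⟨z, hz, hs⟩ => ⟨z, hz, hs.symm⟩⟩
  rw [h]

lemma natSucc (k : ℕ) : ((k + 1 : ℕ) : Ordinal.{v}) = (k : Ordinal.{v}) + 1 := by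
  push_cast; rfl

lemma hrEquiv_succ_of_finite {o : Ordinal.{v}} {x y : α} (h : (Set.uIcc x y).Finite) :
    hrEquiv (o + 1) x y := by
  rw [hrEquiv_succ]
  refine Set.Finite.subset h.finite_subsets ?_
  rintro _ ⟨z, hz, rfl⟩
  exact fun w hw => hw.1

lemma hrEquiv_nat_refl (k : ℕ) (x : α) : hrEquiv (k : Ordinal.{v}) x x := by
  cases k with
  | zero => rw [Nat.cast_zero, hrEquiv_zero]
  | succ k =>
      rw [natSucc]
      exact hrEquiv_succ_of_finite (by rw [Set.uIcc_self]; exact Set.finite_singleton x)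

lemma hrEquiv_nat_symm {k : ℕ} {x y : α} (h : hrEquiv (k : Ordinal.{v}) x y) :
    hrEquiv (k : Ordinal.{v}) y x := by
  cases k with
  | zero => rw [Nat.cast_zero, hrEquiv_zero] at h ⊢; exact h.symm
  | succ k =>
      rw [natSucc, hrEquiv_succ] at h ⊢
      rwa [Set.uIcc_comm y x]

lemma hrEquiv_nat_uIcc {k : ℕ} {x y x' y' : α} (h : hrEquiv (k : Ordinal.{v}) x y)
    (hx : x' ∈ Set.uIcc x y) (hy : y' ∈ Set.uIcc x y) : hrEquiv (k : Ordinal.{v}) x' y' := by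
  cases k with
  | zero =>
      rw [Nat.cast_zero, hrEquiv_zero] at h ⊢
      subst h
      rw [Set.uIcc_self, Set.mem_singleton_iff] at hx hy
      rw [hx, hy]
  | succ k =>
      rw [natSucc, hrEquiv_succ] at h ⊢
      have hsub : Set.uIcc x' y' ⊆ Set.uIcc x y := Set.uIcc_subset_uIcc hx hy
      refine Set.Finite.subset (h.image (fun s => s ∩ Set.uIcc x' y')) ?_
      rintro _ ⟨z, hz, rfl⟩
      refine ⟨{w ∈ Set.uIcc x y | hrEquiv (k : Ordinal.{v}) z w}, ⟨z, hsub hz, rfl⟩, ?_⟩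
      ext w
      simp only [Set.mem_inter_iff, Set.mem_sep_iff]
      exact ⟨fun ⟨⟨_, hR⟩, hw⟩ => ⟨hw, hR⟩, fun ⟨hw, hR⟩ => ⟨⟨hsub hw, hR⟩, hw⟩⟩

lemma hrEquiv_nat_step {k : ℕ} {x y : α} (h : hrEquiv (k : Ordinal.{v}) x y) :
    hrEquiv ((k + 1 : ℕ) : Ordinal.{v}) x y := by
  rw [natSucc, hrEquiv_succ]
  refine Set.Finite.subset (Set.finite_singleton (Set.uIcc x y)) ?_
  rintro _ ⟨z, hz, rfl⟩
  have : {w ∈ Set.uIcc x y | hrEquiv (k : Ordinal.{v}) z w} = Set.uIcc x y := by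
    ext w
    simp only [Set.mem_sep_iff]
    exact ⟨fun hh => hh.1, fun hw => ⟨hw, hrEquiv_nat_uIcc h hz hw⟩⟩
  exact Set.mem_singleton_iff.mpr this

lemma hrEquiv_nat_mono {j k : ℕ} (hjk : j ≤ k) {x y : α}
    (h : hrEquiv (j : Ordinal.{v}) x y) : hrEquiv (k : Ordinal.{v}) x y := by
  induction k with
  | zero => obtain rfl : j = 0 := Nat.le_zero.mp hjk; exact h
  | succ k ih =>
      by_cases hj : j = k + 1
      · subst hj; exact h
      · exact hrEquiv_nat_step (ih (Nat.lt_succ_iff.mp (lt_of_le_of_ne hjk hj)))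

lemma hrEquiv_nat_trans : ∀ {k : ℕ} {x y z : α},
    hrEquiv (k : Ordinal.{v}) x y → hrEquiv (k : Ordinal.{v}) y z →
      hrEquiv (k : Ordinal.{v}) x z := by
  intro k
  induction k with
  | zero =>
      intro x y z h1 h2
      rw [Nat.cast_zero, hrEquiv_zero] at h1 h2 ⊢
      exact h1.trans h2
  | succ k ih =>
      intro x y z h1 h2
      rw [natSucc, hrEquiv_succ] at h1 h2 ⊢
      have hsub : Set.uIcc x z ⊆ Set.uIcc x y ∪ Set.uIcc y z :=
        Set.uIcc_subset_uIcc_union_uIcc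
      refine Set.Finite.subset (Set.Finite.image
        (fun p : Set α × Set α => (p.1 ∪ p.2) ∩ Set.uIcc x z)
        (Set.Finite.prod (h1.insert ∅) (h2.insert ∅))) ?_
      rintro _ ⟨v, hv, rfl⟩
      have hT1 : {w ∈ Set.uIcc x y | hrEquiv (k : Ordinal.{v}) v w} ∈
          insert (∅ : Set α) ((fun z' => {w ∈ Set.uIcc x y | hrEquiv (k : Ordinal.{v}) z' w})
            '' Set.uIcc x y) := by
        by_cases hne : ∃ v' ∈ Set.uIcc x y, hrEquiv (k : Ordinal.{v}) v v'
        · obtain ⟨v', hv', hvv'⟩ := hne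
          refine Set.mem_insert_iff.mpr (Or.inr ⟨v', hv', ?_⟩)
          ext w
          simp only [Set.mem_sep_iff]
          exact ⟨fun ⟨hw, hR⟩ => ⟨hw, ih hvv' hR⟩,
            fun ⟨hw, hR⟩ => ⟨hw, ih (hrEquiv_nat_symm hvv') hR⟩⟩
        · refine Set.mem_insert_iff.mpr (Or.inl ?_)
          ext w
          simp only [Set.mem_sep_iff, Set.mem_empty_iff_false, iff_false]
          exact fun ⟨hw, hR⟩ => hne ⟨w, hw, hR⟩
      have hT2 : {w ∈ Set.uIcc y z | hrEquiv (k : Ordinal.{v}) v w} ∈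
          insert (∅ : Set α) ((fun z' => {w ∈ Set.uIcc y z | hrEquiv (k : Ordinal.{v}) z' w})
            '' Set.uIcc y z) := by
        by_cases hne : ∃ v' ∈ Set.uIcc y z, hrEquiv (k : Ordinal.{v}) v v'
        · obtain ⟨v', hv', hvv'⟩ := hne
          refine Set.mem_insert_iff.mpr (Or.inr ⟨v', hv', ?_⟩)
          ext w
          simp only [Set.mem_sep_iff]
          exact ⟨fun ⟨hw, hR⟩ => ⟨hw, ih hvv' hR⟩,
            fun ⟨hw, hR⟩ => ⟨hw, ih (hrEquiv_nat_symm hvv') hR⟩⟩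
        · refine Set.mem_insert_iff.mpr (Or.inl ?_)
          ext w
          simp only [Set.mem_sep_iff, Set.mem_empty_iff_false, iff_false]
          exact fun ⟨hw, hR⟩ => hne ⟨w, hw, hR⟩
      refine ⟨({w ∈ Set.uIcc x y | hrEquiv (k : Ordinal.{v}) v w},
        {w ∈ Set.uIcc y z | hrEquiv (k : Ordinal.{v}) v w}),
        Set.mem_prod.mpr ⟨hT1, hT2⟩, ?_⟩
      ext w
      simp only [Set.mem_inter_iff, Set.mem_union, Set.mem_sep_iff]
      constructor
      · rintro ⟨(⟨_, hR⟩ | ⟨_, hR⟩), hw⟩ <;> exact ⟨hw, hR⟩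
      · rintro ⟨hw, hR⟩
        rcases hsub hw with hw' | hw'
        · exact ⟨Or.inl ⟨hw', hR⟩, hw⟩
        · exact ⟨Or.inr ⟨hw', hR⟩, hw⟩

lemma class_eq_rel {k : ℕ} {x y : α} (h : hrEquiv (k : Ordinal.{v}) x y) (T : Set α) :
    {w ∈ T | hrEquiv (k : Ordinal.{v}) x w} = {w ∈ T | hrEquiv (k : Ordinal.{v}) y w} := by
  ext w
  simp only [Set.mem_sep_iff]
  exact ⟨fun ⟨hw, h2⟩ => ⟨hw, hrEquiv_nat_trans (hrEquiv_nat_symm h) h2⟩,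
    fun ⟨hw, h2⟩ => ⟨hw, hrEquiv_nat_trans h h2⟩⟩

lemma class_eq_abs {k : ℕ} {x y : α} (h : hrEquiv (k : Ordinal.{v}) x y) :
    {w : α | hrEquiv (k : Ordinal.{v}) x w} = {w : α | hrEquiv (k : Ordinal.{v}) y w} := by
  ext w
  simp only [Set.mem_setOf_eq]
  exact ⟨fun h2 => hrEquiv_nat_trans (hrEquiv_nat_symm h) h2,
    fun h2 => hrEquiv_nat_trans h h2⟩

end HRLemmas

section Transfer
variable {α : Type u} [LinearOrder α]

lemma hrEquiv_nat_of_strictMono {β : Type w} [LinearOrder β] {f : α → β} (hf : StrictMono f) :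
    ∀ {k : ℕ} {x y : α}, hrEquiv (k : Ordinal.{v}) (f x) (f y) → hrEquiv (k : Ordinal.{v}) x y := by
  intro k
  induction k with
  | zero =>
      intro x y h
      rw [Nat.cast_zero, hrEquiv_zero] at h ⊢
      exact hf.injective h
  | succ k ih =>
      intro x y h
      rw [natSucc, hrEquiv_succ] at h ⊢
      have hmaps : Set.MapsTo f (Set.uIcc x y) (Set.uIcc (f x) (f y)) :=
        hf.monotone.mapsTo_uIcc
      refine factor_finite _
        (fun z => {w ∈ Set.uIcc (f x) (f y) | hrEquiv (k : Ordinal.{v}) (f z) w}) ?_ ?_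
      · refine h.subset ?_
        rintro _ ⟨z, hz, rfl⟩
        exact ⟨f z, hmaps hz, rfl⟩
      · intro a _ b hb heq
        have hb' : f b ∈ {w ∈ Set.uIcc (f x) (f y) | hrEquiv (k : Ordinal.{v}) (f b) w} :=
          ⟨hmaps hb, hrEquiv_nat_refl k (f b)⟩
        beta_reduce at heq
        rw [← heq] at hb'
        exact class_eq_rel (ih hb'.2) _

lemma uIcc_image_of_convex {γ : Type w} [LinearOrder γ] {f : α → γ} (hf : StrictMono f)
    (hconv : ∀ b₁ b₂ : α, ∀ c : γ, f b₁ ≤ c → c ≤ f b₂ → ∃ b, f b = c) (b b' : α) :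
    Set.uIcc (f b) (f b') = f '' Set.uIcc b b' := by
  apply Set.Subset.antisymm
  · intro c hc
    rw [← Set.Icc_min_max, Set.mem_Icc] at hc
    have h1 : f (min b b') ≤ c := by rw [hf.monotone.map_min]; exact hc.1
    have h2 : c ≤ f (max b b') := by rw [hf.monotone.map_max]; exact hc.2
    obtain ⟨b₀, rfl⟩ := hconv _ _ c h1 h2
    refine ⟨b₀, ?_, rfl⟩
    rw [← Set.Icc_min_max, Set.mem_Icc]
    exact ⟨hf.le_iff_le.mp h1, hf.le_iff_le.mp h2⟩
  · rintro _ ⟨b₀, hb₀, rfl⟩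
    exact hf.monotone.mapsTo_uIcc hb₀

lemma hrEquiv_nat_map_of_convex {γ : Type w} [LinearOrder γ] {f : α → γ} (hf : StrictMono f)
    (hconv : ∀ b₁ b₂ : α, ∀ c : γ, f b₁ ≤ c → c ≤ f b₂ → ∃ b, f b = c) :
    ∀ {k : ℕ} {b b' : α}, hrEquiv (k : Ordinal.{v}) b b' →
      hrEquiv (k : Ordinal.{v}) (f b) (f b') := by
  intro k
  induction k with
  | zero =>
      intro b b' h
      rw [Nat.cast_zero, hrEquiv_zero] at h ⊢
      rw [h]
  | succ k ih =>
      intro b b' h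
      rw [natSucc, hrEquiv_succ] at h ⊢
      have himg := uIcc_image_of_convex hf hconv b b'
      have hval : ∀ z ∈ Set.uIcc b b',
          {w ∈ Set.uIcc (f b) (f b') | hrEquiv (k : Ordinal.{v}) (f z) w} =
            f '' {w ∈ Set.uIcc b b' | hrEquiv (k : Ordinal.{v}) z w} := by
        intro z hz
        ext c
        constructor
        · rintro ⟨hc, hR⟩
          rw [himg] at hc
          obtain ⟨w₀, hw₀, rfl⟩ := hc
          exact ⟨w₀, ⟨hw₀, hrEquiv_nat_of_strictMono hf hR⟩, rfl⟩
        · rintro ⟨w₀, ⟨hw₀, hR⟩, rfl⟩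
          exact ⟨by rw [himg]; exact ⟨w₀, hw₀, rfl⟩, ih hR⟩
      refine Set.Finite.subset (h.image (Set.image f)) ?_
      rintro _ ⟨c, hc, rfl⟩
      rw [himg] at hc
      obtain ⟨z, hz, rfl⟩ := hc
      exact ⟨{w ∈ Set.uIcc b b' | hrEquiv (k : Ordinal.{v}) z w}, ⟨z, hz, rfl⟩,
        (hval z hz).symm⟩

end Transfer

section ClassesLemmas

lemma hrClasses_eq_image (α : Type u) [LinearOrder α] (o : Ordinal.{u}) :
    hrClasses α o = (fun z => {w | hrEquiv o z w}) '' Set.univ := by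
  ext s
  simp only [hrClasses, Set.mem_setOf_eq, Set.image_univ, Set.mem_range]
  exact ⟨fun ⟨z, hz⟩ => ⟨z, hz.symm⟩, fun ⟨z, hz⟩ => ⟨z, hz.symm⟩⟩

variable {α : Type u} [LinearOrder α]

lemma hrClasses_nat_finite_of_strictMono {β : Type u} [LinearOrder β] {f : α → β}
    (hf : StrictMono f) {N : ℕ} (h : (hrClasses β (N : Ordinal.{u})).Finite) :
    (hrClasses α (N : Ordinal.{u})).Finite := by
  rw [hrClasses_eq_image] at h ⊢
  refine factor_finite _ (fun z => {w | hrEquiv (N : Ordinal.{u}) (f z) w}) ?_ ?_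
  · refine h.subset ?_
    rintro _ ⟨z, -, rfl⟩
    exact ⟨f z, trivial, rfl⟩
  · intro a _ b _ heq
    have hb' : f b ∈ {w | hrEquiv (N : Ordinal.{u}) (f b) w} := hrEquiv_nat_refl N (f b)
    beta_reduce at heq
    rw [← heq] at hb'
    exact class_eq_abs (hrEquiv_nat_of_strictMono hf hb')

lemma hrClasses_nat_mono {j k : ℕ} (hjk : j ≤ k)
    (h : (hrClasses α (j : Ordinal.{u})).Finite) :
    (hrClasses α (k : Ordinal.{u})).Finite := by
  rw [hrClasses_eq_image] at h ⊢
  refine factor_finite _ (fun z => {w | hrEquiv (j : Ordinal.{u}) z w}) ?_ ?_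
  · refine h.subset ?_
    rintro _ ⟨z, -, rfl⟩
    exact ⟨z, trivial, rfl⟩
  · intro a _ b _ heq
    have hb' : b ∈ {w | hrEquiv (j : Ordinal.{u}) b w} := hrEquiv_nat_refl j b
    beta_reduce at heq
    rw [← heq] at hb'
    exact class_eq_abs (hrEquiv_nat_mono hjk hb')

lemma all_equiv_of_classes_finite {k : ℕ} (h : (hrClasses α (k : Ordinal.{u})).Finite)
    (x y : α) : hrEquiv ((k + 1 : ℕ) : Ordinal.{u}) x y := by
  rw [natSucc, hrEquiv_succ]
  refine factor_finite _ (fun z => {w | hrEquiv (k : Ordinal.{u}) z w}) ?_ ?_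
  · refine h.subset ?_
    rintro _ ⟨z, -, rfl⟩
    exact ⟨z, rfl⟩
  · intro a _ b _ heq
    have hb' : b ∈ {w | hrEquiv (k : Ordinal.{u}) b w} := hrEquiv_nat_refl k b
    beta_reduce at heq
    rw [← heq] at hb'
    exact class_eq_rel hb' _

lemma main_sum {I : Type w} [LinearOrder I] {q : α → I} (hq : Monotone q) {NF NI : ℕ}
    (hfib : ∀ x y : α, q x = q y → hrEquiv (NF : Ordinal.{u}) x y)
    {F : Set (Set I)} (hF : F.Finite)
    (hmem : ∀ z : α, {w | hrEquiv (NI : Ordinal.{u}) (q z) w} ∈ F) :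
    (hrClasses α ((NF + 1 + NI : ℕ) : Ordinal.{u})).Finite := by
  have key : ∀ (k : ℕ) (x y : α), hrEquiv (k : Ordinal.{u}) (q x) (q y) →
      hrEquiv ((NF + 1 + k : ℕ) : Ordinal.{u}) x y := by
    intro k
    induction k with
    | zero =>
        intro x y h
        rw [Nat.cast_zero, hrEquiv_zero] at h
        exact hrEquiv_nat_mono (by omega) (hfib x y h)
    | succ k ih =>
        intro x y h
        rw [natSucc, hrEquiv_succ] at h
        have harith : (NF + 1 + (k + 1) : ℕ) = (NF + 1 + k) + 1 := by omega
        rw [harith, natSucc, hrEquiv_succ]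
        refine factor_finite _
          (fun z => {w ∈ Set.uIcc (q x) (q y) | hrEquiv (k : Ordinal.{u}) (q z) w}) ?_ ?_
        · refine h.subset ?_
          rintro _ ⟨z, hz, rfl⟩
          exact ⟨q z, hq.mapsTo_uIcc hz, rfl⟩
        · intro a _ b hb heq
          have hb' : q b ∈ {w ∈ Set.uIcc (q x) (q y) |
              hrEquiv (k : Ordinal.{u}) (q b) w} :=
            ⟨hq.mapsTo_uIcc hb, hrEquiv_nat_refl k (q b)⟩
          beta_reduce at heq
          rw [← heq] at hb'
          exact class_eq_rel (ih a b hb'.2) _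
  rw [hrClasses_eq_image]
  refine factor_finite _ (fun z => {w | hrEquiv (NI : Ordinal.{u}) (q z) w}) ?_ ?_
  · exact hF.subset (by rintro _ ⟨z, -, rfl⟩; exact hmem z)
  · intro a _ b _ heq
    have hb' : q b ∈ {w | hrEquiv (NI : Ordinal.{u}) (q b) w} := hrEquiv_nat_refl NI (q b)
    beta_reduce at heq
    rw [← heq] at hb'
    exact class_eq_abs (key NI a b hb')

end ClassesLemmas


section Structural

lemma lex_fst_monotone {α β : Type*} [LinearOrder α] [LinearOrder β] :
    Monotone (fun p : Lex (α × β) => (ofLex p).1) := by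
  intro p p' h
  rcases Prod.Lex.le_iff.mp h with h1 | ⟨h1, -⟩
  · exact h1.le
  · exact h1.le

lemma lex_snd_strictMono_fiber {α β : Type*} [LinearOrder α] [LinearOrder β] (a : α) :
    StrictMono (fun b : β => toLex (a, b)) := by
  intro b b' hb
  exact Prod.Lex.lt_iff.mpr (Or.inr ⟨rfl, hb⟩)

lemma lex_fiber_convex {α β : Type*} [LinearOrder α] [LinearOrder β] (a : α) :
    ∀ b₁ b₂ : β, ∀ c : Lex (α × β), toLex (a, b₁) ≤ c → c ≤ toLex (a, b₂) →
      ∃ b, toLex (a, b) = c := by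
  intro b₁ b₂ c h1 h2
  have hc1 : a ≤ (ofLex c).1 := by
    rcases Prod.Lex.le_iff.mp h1 with h | ⟨h, -⟩
    · exact h.le
    · exact h.le
  have hc2 : (ofLex c).1 ≤ a := by
    rcases Prod.Lex.le_iff.mp h2 with h | ⟨h, -⟩
    · exact h.le
    · exact h.le
  refine ⟨(ofLex c).2, ?_⟩
  have : a = (ofLex c).1 := le_antisymm hc1 hc2
  rw [this]
  rfl

lemma lexPair_classes_finite {α β : Type u} [LinearOrder α] [LinearOrder β] {Na Nb : ℕ}
    (ha : (hrClasses α (Na : Ordinal.{u})).Finite)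
    (hb : (hrClasses β (Nb : Ordinal.{u})).Finite) :
    (hrClasses (Lex (α × β)) (((Nb + 1) + 1 + Na : ℕ) : Ordinal.{u})).Finite := by
  refine main_sum (q := fun p : Lex (α × β) => (ofLex p).1) lex_fst_monotone
    (NF := Nb + 1) (NI := Na) ?_ (F := hrClasses α (Na : Ordinal.{u})) ha ?_
  · intro p p' h
    beta_reduce at h
    have hall := all_equiv_of_classes_finite hb ((ofLex p).2) ((ofLex p').2)
    have := hrEquiv_nat_map_of_convex (lex_snd_strictMono_fiber (α := α) (β := β) ((ofLex p).1))
      (lex_fiber_convex _) hall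
    have hp : toLex (((ofLex p).1 : α), (ofLex p).2) = p := rfl
    have hp' : toLex (((ofLex p).1 : α), (ofLex p').2) = p' := by
      rw [h]
      rfl
    rw [hp, hp'] at this
    exact this
  · intro z
    exact ⟨(ofLex z).1, rfl⟩

lemma hrEquiv_nat_univ {α : Type u} [LinearOrder α] :
    ∀ (k : ℕ) (x y : α), hrEquiv ((k : ℕ) : Ordinal.{v}) x y ↔
      hrEquiv ((k : ℕ) : Ordinal.{w}) x y := by
  intro k
  induction k with
  | zero =>
      intro x y
      rw [Nat.cast_zero, Nat.cast_zero, hrEquiv_zero, hrEquiv_zero]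
  | succ k ih =>
      intro x y
      rw [natSucc, natSucc, hrEquiv_succ, hrEquiv_succ]
      have heq : (fun z => {w' ∈ Set.uIcc x y | hrEquiv ((k : ℕ) : Ordinal.{v}) z w'}) =
          (fun z => {w' ∈ Set.uIcc x y | hrEquiv ((k : ℕ) : Ordinal.{w}) z w'}) := by
        funext z
        ext w'
        simp only [Set.mem_sep_iff]
        rw [ih z w']
      rw [heq]

lemma lexLocFin_classes_finite {α : Type u} [LinearOrder α] {β : Type v} [LinearOrder β]
    (hfinβ : ∀ x y : β, (Set.uIcc x y).Finite) {Na : ℕ}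
    (ha : (hrClasses α (Na : Ordinal.{u})).Finite) :
    (hrClasses (Lex (α × β)) ((1 + 1 + Na : ℕ) : Ordinal.{max u v})).Finite := by
  refine main_sum (q := fun p : Lex (α × β) => (ofLex p).1) lex_fst_monotone
    (NF := 1) (NI := Na) ?_ (F := hrClasses α (Na : Ordinal.{u})) ha ?_
  · intro p p' h
    beta_reduce at h
    have hicc : (Set.uIcc p p').Finite := by
      have hp : toLex (((ofLex p).1 : α), (ofLex p).2) = p := rfl
      have hp' : toLex (((ofLex p).1 : α), (ofLex p').2) = p' := by
        rw [h]
        rfl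
      rw [← hp, ← hp',
        uIcc_image_of_convex (lex_snd_strictMono_fiber (α := α) (β := β) ((ofLex p).1))
          (lex_fiber_convex _)]
      exact ((hfinβ _ _).image _)
    have h1 : ((1 : ℕ) : Ordinal.{max u v}) = 0 + 1 := by simp
    rw [h1]
    exact hrEquiv_succ_of_finite hicc
  · intro z
    have : {w | hrEquiv ((Na : ℕ) : Ordinal.{max u v}) ((ofLex z).1) w} =
        {w | hrEquiv ((Na : ℕ) : Ordinal.{u}) ((ofLex z).1) w} := by
      ext w
      simp only [Set.mem_setOf_eq]
      rw [hrEquiv_nat_univ Na]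
    show {w | hrEquiv ((Na : ℕ) : Ordinal.{max u v}) ((ofLex z).1) w} ∈ _
    rw [this]
    exact ⟨(ofLex z).1, rfl⟩

lemma sum_isRight_monotone {α β : Type*} [LinearOrder α] [LinearOrder β] :
    Monotone (fun x : Lex (α ⊕ β) => (ofLex x).isRight) := by
  intro x y h
  rw [Sum.Lex.le_def] at h
  cases h with
  | inl h => exact le_rfl
  | inr h => exact le_rfl
  | sep a b =>
      show (false : Bool) ≤ true
      exact Bool.false_le true

lemma lexSum_classes_finite {α β : Type u} [LinearOrder α] [LinearOrder β] {Na Nb : ℕ}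
    (ha : (hrClasses α (Na : Ordinal.{u})).Finite)
    (hb : (hrClasses β (Nb : Ordinal.{u})).Finite) :
    (hrClasses (Lex (α ⊕ β)) (((max Na Nb + 1) + 1 + 0 : ℕ) : Ordinal.{u})).Finite := by
  refine main_sum (q := fun x : Lex (α ⊕ β) => (ofLex x).isRight) sum_isRight_monotone
    (NF := max Na Nb + 1) (NI := 0) ?_ (F := (Set.univ : Set (Set Bool))) Set.finite_univ
    (fun _ => trivial)
  intro x y h
  beta_reduce at h
  rcases hx : ofLex x with a | b <;> rcases hy : ofLex y with a' | b'
  · -- both inl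
    have hf : StrictMono (fun a : α => toLex (Sum.inl a) : α → Lex (α ⊕ β)) := by
      intro u v huv
      exact Sum.Lex.inl_lt_inl_iff.mpr huv
    have hconv : ∀ b₁ b₂ : α, ∀ c : Lex (α ⊕ β),
        toLex (Sum.inl b₁) ≤ c → c ≤ toLex (Sum.inl b₂) → ∃ b, toLex (Sum.inl b) = c := by
      intro b₁ b₂ c h1 h2
      rcases hc : ofLex c with a₀ | b₀
      · exact ⟨a₀, by rw [← hc]; rfl⟩
      · exfalso
        have : c = toLex (Sum.inr b₀) := by rw [← hc]; rfl
        rw [this] at h2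
        exact Sum.Lex.not_inr_le_inl h2
    have hall := all_equiv_of_classes_finite (hrClasses_nat_mono (le_max_left Na Nb) ha) a a'
    have := hrEquiv_nat_map_of_convex hf hconv hall
    have hx' : (toLex (Sum.inl a) : Lex (α ⊕ β)) = x := by rw [← hx]; rfl
    have hy' : (toLex (Sum.inl a') : Lex (α ⊕ β)) = y := by rw [← hy]; rfl
    rwa [hx', hy'] at this
  · exfalso; rw [hx, hy] at h; simp at h
  · exfalso; rw [hx, hy] at h; simp at h
  · -- both inr
    have hf : StrictMono (fun b : β => toLex (Sum.inr b) : β → Lex (α ⊕ β)) := by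
      intro u v huv
      exact Sum.Lex.inr_lt_inr_iff.mpr huv
    have hconv : ∀ b₁ b₂ : β, ∀ c : Lex (α ⊕ β),
        toLex (Sum.inr b₁) ≤ c → c ≤ toLex (Sum.inr b₂) → ∃ b, toLex (Sum.inr b) = c := by
      intro b₁ b₂ c h1 h2
      rcases hc : ofLex c with a₀ | b₀
      · exfalso
        have : c = toLex (Sum.inl a₀) := by rw [← hc]; rfl
        rw [this] at h1
        exact Sum.Lex.not_inr_le_inl h1
      · exact ⟨b₀, by rw [← hc]; rfl⟩
    have hall := all_equiv_of_classes_finite (hrClasses_nat_mono (le_max_right Na Nb) hb) b b'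
    have := hrEquiv_nat_map_of_convex hf hconv hall
    have hx' : (toLex (Sum.inr b) : Lex (α ⊕ β)) = x := by rw [← hx]; rfl
    have hy' : (toLex (Sum.inr b') : Lex (α ⊕ β)) = y := by rw [← hy]; rfl
    rwa [hx', hy'] at this

lemma hrClasses_finite_of_iso {α β : Type u} [LinearOrder α] [LinearOrder β] (e : α ≃o β)
    {N : ℕ} (h : (hrClasses α (N : Ordinal.{u})).Finite) :
    (hrClasses β (N : Ordinal.{u})).Finite :=
  hrClasses_nat_finite_of_strictMono e.symm.strictMono h

lemma finpres_rank {α : Type u} {inst : LinearOrder α} (h : IsFinPresLO α inst) :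
    ∃ N : ℕ, (@hrClasses α inst (N : Ordinal.{u})).Finite := by
  induction h with
  | subsingleton α h =>
      have : Finite α := Finite.of_subsingleton
      exact ⟨0, Set.toFinite _⟩
  | omegaMul α h ih =>
      obtain ⟨N, hN⟩ := ih
      exact ⟨1 + 1 + N, lexLocFin_classes_finite (fun x y => Set.finite_interval x y) hN⟩
  | omegaStarMul α h ih =>
      obtain ⟨N, hN⟩ := ih
      exact ⟨1 + 1 + N, lexLocFin_classes_finite (fun x y => Set.finite_interval x y) hN⟩
  | sum α β hα hβ ihα ihβ =>
      obtain ⟨Na, hNa⟩ := ihα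
      obtain ⟨Nb, hNb⟩ := ihβ
      exact ⟨(max Na Nb + 1) + 1 + 0, lexSum_classes_finite hNa hNb⟩
  | iso α β hα e ih =>
      obtain ⟨N, hN⟩ := ih
      exact ⟨N, hrClasses_finite_of_iso e hN⟩

end Structural


section Chains

lemma chain_classes_finite :
    ∀ (n : ℕ) {L : Fin n → Type u} [inst : ∀ i, LinearOrder (L i)] {N : ℕ}
      (P : ∀ i, Set (L i)) (hP : ∀ i, (hrClasses ↥(P i) (N : Ordinal.{u})).Finite)
      (A : Set (∀ i, L i)) (hA : IsChain (· ≤ ·) A)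
      (hsub : ∀ x ∈ A, ∀ i, x i ∈ P i),
      (@hrClasses ↥A (chainLinearOrder hA) ((n * (N + 3) : ℕ) : Ordinal.{u})).Finite := by
  intro n
  induction n with
  | zero =>
      intro L inst N P hP A hA hsub
      have : Subsingleton ↥A := ⟨fun a b => Subtype.ext (funext fun i => i.elim0)⟩
      have : Finite ↥A := Finite.of_subsingleton
      exact Set.toFinite _
  | succ n ih =>
      intro L inst N P hP A hA hsub
      letI instA : LinearOrder ↥A := chainLinearOrder hA
      set r : (∀ i, L i) → (∀ j : Fin n, L j.succ) := fun x j => x j.succ with hr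
      have hrmono : ∀ x y : ∀ i, L i, x ≤ y → r x ≤ r y := fun x y h j => h j.succ
      set B : Set (∀ j : Fin n, L j.succ) := r '' A with hBdef
      have hB : IsChain (· ≤ ·) B := by
        rintro _ ⟨x, hx, rfl⟩ _ ⟨y, hy, rfl⟩ hne
        have hxy : x ≠ y := fun hc => hne (by rw [hc])
        exact (hA hx hy hxy).imp (hrmono x y) (hrmono y x)
      letI instB : LinearOrder ↥B := chainLinearOrder hB
      have hsubB : ∀ b ∈ B, ∀ j : Fin n, b j ∈ P j.succ := by
        rintro _ ⟨x, hx, rfl⟩ j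
        exact hsub x hx j.succ
      have hBfin := ih (fun j => P j.succ) (fun j => hP j.succ) B hB hsubB
      -- the embedding into the lexicographic pair
      let e : ↥A → Lex (↥B × ↥(P 0)) := fun x =>
        toLex (⟨r ↑x, ⟨↑x, x.2, rfl⟩⟩, ⟨(↑x : ∀ i, L i) 0, hsub ↑x x.2 0⟩)
      have he : StrictMono e := by
        intro x y hxy
        have hle : (x : ∀ i, L i) ≤ (y : ∀ i, L i) := hxy.le
        have hne : (x : ∀ i, L i) ≠ (y : ∀ i, L i) := fun h => hxy.ne (Subtype.ext h)
        refine Prod.Lex.lt_iff.mpr ?_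
        by_cases hreq : r ↑x = r ↑y
        · right
          refine ⟨Subtype.ext hreq, ?_⟩
          show (↑x : ∀ i, L i) 0 < (↑y : ∀ i, L i) 0
          refine lt_of_le_of_ne (hle 0) fun heq0 => hne (funext fun i => ?_)
          refine Fin.cases ?_ ?_ i
          · exact heq0
          · intro j
            exact congrFun hreq j
        · left
          show (⟨r ↑x, _⟩ : ↥B) < ⟨r ↑y, _⟩
          refine lt_of_le_of_ne ?_ fun hc => hreq (congrArg Subtype.val hc)
          show r ↑x ≤ r ↑y
          exact hrmono _ _ hle
      have hLex := lexPair_classes_finite (α := ↥B) (β := ↥(P 0))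
        (Na := n * (N + 3)) (Nb := N) hBfin (hP 0)
      have hstep := hrClasses_nat_finite_of_strictMono he hLex
      have harith : (N + 1) + 1 + n * (N + 3) ≤ (n + 1) * (N + 3) := by
        have : (n + 1) * (N + 3) = n * (N + 3) + (N + 3) := by ring
        omega
      exact hrClasses_nat_mono harith hstep

end Chains



/-- a discrete abstract `n`-hammock whose projections are finitely
presented linear orders, all bounded below or all unbounded below, and all bounded above
or all unbounded above, has density `< ω²`. -/
theorem statement19 {n : ℕ} (hn : 1 ≤ n) {L : Fin n → Type u} [∀ i, LinearOrder (L i)]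
    {H : Set (∀ i, L i)} (hH : IsHammock H)
    (hdisc : ∀ i, IsDiscreteOrder ↥(proj i H))
    (hfp : ∀ i, IsFinPresLO ↥(proj i H) inferInstance)
    (hbelow : (∀ i, ∃ m, IsLeast (proj i H) m) ∨ ∀ i, ¬ ∃ m, IsLeast (proj i H) m)
    (habove : (∀ i, ∃ m, IsGreatest (proj i H) m) ∨ ∀ i, ¬ ∃ m, IsGreatest (proj i H) m) :
    posetDensitySet H <
      (((Ordinal.omega0.{u} * Ordinal.omega0.{u} : Ordinal.{u}) : WithTop Ordinal.{u}) :
        WithBot (WithTop Ordinal.{u})) := by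
  classical
  have hN : ∀ i : Fin n, ∃ N : ℕ, (hrClasses ↥(proj i H) ((N : ℕ) : Ordinal.{u})).Finite :=
    fun i => finpres_rank (hfp i)
  choose g hg using hN
  set N : ℕ := Finset.univ.sup g with hNdef
  have hP : ∀ i, (hrClasses ↥(proj i H) ((N : ℕ) : Ordinal.{u})).Finite := fun i =>
    hrClasses_nat_mono (Finset.le_sup (Finset.mem_univ i)) (hg i)
  set B₀ : ℕ := n * (N + 3) with hB₀
  set K : Ordinal.{u} := Ordinal.omega0.{u} * ((B₀ : Ordinal.{u}) + 1) with hK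
  have hKlt : K < Ordinal.omega0.{u} * Ordinal.omega0.{u} := by
    rw [hK]
    refine (mul_lt_mul_iff_right₀ Ordinal.omega0_pos).mpr ?_
    rw [← natSucc B₀]
    exact Ordinal.nat_lt_omega0 (B₀ + 1)
  unfold posetDensitySet
  refine lt_of_le_of_lt (csSup_le' ?_)
    (WithBot.coe_lt_coe.mpr (WithTop.coe_lt_coe.mpr hKlt))
  rintro d ⟨A, hchain, hAH, hmax, ⟨m, hm, -⟩, rfl⟩
  have hsub : ∀ x ∈ A, ∀ i, x i ∈ proj i H := fun x hx i => ⟨x, hAH hx, rfl⟩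
  have hcl := chain_classes_finite n (fun i => proj i H) hP A hchain hsub
  have hex : ∃ o : Ordinal.{u}, (@hrClasses ↥A (chainLinearOrder hchain) o).Finite :=
    ⟨_, hcl⟩
  have hne : Nonempty ↥A := ⟨⟨m, hm⟩⟩
  unfold chainDensity density
  rw [dif_pos hex, if_pos hne]
  refine WithBot.coe_le_coe.mpr (WithTop.coe_le_coe.mpr ?_)
  have h1 : sInf {o : Ordinal.{u} | (@hrClasses ↥A (chainLinearOrder hchain) o).Finite} ≤
      ((B₀ : ℕ) : Ordinal.{u}) := csInf_le (OrderBot.bddBelow _) hcl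
  calc Ordinal.omega0.{u} * sInf {o : Ordinal.{u} |
          (@hrClasses ↥A (chainLinearOrder hchain) o).Finite} + _
      ≤ Ordinal.omega0.{u} * ((B₀ : ℕ) : Ordinal.{u}) + _ :=
        add_le_add_left (mul_le_mul_right h1 _) _
    _ ≤ Ordinal.omega0.{u} * ((B₀ : ℕ) : Ordinal.{u}) + Ordinal.omega0.{u} :=
        add_le_add_right (Ordinal.nat_lt_omega0 _).le _
    _ = K := by rw [hK, Ordinal.add_one_eq_succ, Ordinal.mul_succ]


end PaperHam

end
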